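/- The compositions τ = ι∘φ^(I) and τ_s = ι∘φ_s^(I) are commuting involutions: wherever all the occurring denominators are nonzero, τ(τ(p)) = p, τ_s(τ_s(p)) = p, and τ(τ_s(p)) = τ_s(τ(p)) for p = (x, y, z, u) ∈ ℂ⁴. -/
import Mathlib


/-- New coordinate of the autonomous `d₄P^(I)` map `φ^(I)`. -/
noncomputable def F (a b c d : ℂ) (p : ℂ × ℂ × ℂ × ℂ) : ℂ :=
  match p with
  | (x, y, z, u) =>
    (-a * y * (x^2 + y^2 + z^2 + 2*y*z + 2*x*y + x*z + z*u)
      - b * y * (x + y + z) - c * y + d) / (a * x * y)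

/-- New coordinate of the shadow map `φ_s^(I)`. -/
noncomputable def G (p : ℂ × ℂ × ℂ × ℂ) : ℂ :=
  match p with
  | (x, y, z, u) => (y*z + z^2 + z*u - x^2 - x*y) / x

/-- Denominator of `F` at the point `p = (x, y, z, u)`. -/
noncomputable def denomF (a : ℂ) (p : ℂ × ℂ × ℂ × ℂ) : ℂ := a * p.1 * p.2.1

/-- Denominator of `G` at the point `p = (x, y, z, u)`. -/
noncomputable def denomG (p : ℂ × ℂ × ℂ × ℂ) : ℂ := p.1

/-- The composition `τ = ι ∘ φ^(I)` : `(x, y, z, u) ↦ (z, y, x, F(x, y, z, u))`. -/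
noncomputable def τ (a b c d : ℂ) (p : ℂ × ℂ × ℂ × ℂ) : ℂ × ℂ × ℂ × ℂ :=
  (p.2.2.1, p.2.1, p.1, F a b c d p)

/-- The composition `τ_s = ι ∘ φ_s^(I)` : `(x, y, z, u) ↦ (z, y, x, G(x, y, z, u))`. -/
noncomputable def τs (p : ℂ × ℂ × ℂ × ℂ) : ℂ × ℂ × ℂ × ℂ :=
  (p.2.2.1, p.2.1, p.1, G p)

/-- `τ = ι ∘ φ^(I)` and `τ_s = ι ∘ φ_s^(I)` are commuting involutions, wherever all the
occurring denominators are nonzero. -/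
theorem tau_taus_commuting_involutions (a b c d : ℂ) (p : ℂ × ℂ × ℂ × ℂ)
    (h₁ : denomF a p ≠ 0) (h₂ : denomG p ≠ 0)
    (h₃ : denomF a (τ a b c d p) ≠ 0) (h₄ : denomF a (τs p) ≠ 0)
    (h₅ : denomG (τ a b c d p) ≠ 0) (h₆ : denomG (τs p) ≠ 0) :
    τ a b c d (τ a b c d p) = p ∧ τs (τs p) = p ∧
      τ a b c d (τs p) = τs (τ a b c d p) := by
  obtain ⟨x, y, z, u⟩ := p
  simp only [denomF, denomG, τ, τs, F, G] at *
  obtain ⟨ha, hx, hy⟩ : a ≠ 0 ∧ x ≠ 0 ∧ y ≠ 0 := by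
    refine ⟨?_, ?_, ?_⟩ <;> (intro h; apply h₁; simp [h])
  have hz : z ≠ 0 := h₅
  refine ⟨?_, ?_, ?_⟩ <;> (refine Prod.ext rfl (Prod.ext rfl (Prod.ext rfl ?_)); field_simp; ring)
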